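/- arXiv:1909.07291 — 2 statements merged into one kernel-verified Lean document; each statement's English description precedes it below -/
import Mathlib

section
/- Let A, E : ℝ × ℝ³ → ℝ³ and ψ : ℝ × ℝ³ → ℝ be C² fields, set B = ∇×A (spatial curl), and suppose the un-curled Faraday law ∂A/∂t + E + ∇ψ = 0 holds everywhere. Then the magnetic helicity density h_m = A·B satisfies the transport equation ∂(A·B)/∂t + ∇·(E×A + ψ B) = −2 E·B. -/
/-!
By the un-curled Faraday law `∂ₜA = -(E + ∇ψ)`. Time and space derivatives of a `C²` field
commute and `∇×∇ψ = 0`, so `∂ₜB = ∇×∂ₜA = -∇×E`. Hence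
`∂ₜ(A·B) = -(E + ∇ψ)·B - A·(∇×E)`, while `∇·(E×A) = A·(∇×E) - E·B` and
`∇·(ψB) = ∇ψ·B + ψ ∇·B` with `∇·B = ∇·(∇×A) = 0`. The terms `A·(∇×E)` and `∇ψ·B` cancel in
the sum, leaving `-2 E·B`.
-/

noncomputable section

/-- Vectors in ℝ³. -/
abbrev V3 := Fin 3 → ℝ

/-- Euclidean dot product on ℝ³. -/
def dot3 (a b : V3) : ℝ := a 0 * b 0 + a 1 * b 1 + a 2 * b 2

/-- Cross product on ℝ³. -/
def cross3 (a b : V3) : V3 :=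
  ![a 1 * b 2 - a 2 * b 1, a 2 * b 0 - a 0 * b 2, a 0 * b 1 - a 1 * b 0]

/-- Euclidean norm on ℝ³. -/
def norm3 (a : V3) : ℝ := Real.sqrt (dot3 a a)

/-- Spatial partial derivative of a time-dependent scalar field. -/
def pdS (i : Fin 3) (f : ℝ × V3 → ℝ) (p : ℝ × V3) : ℝ :=
  fderiv ℝ (fun x => f (p.1, x)) p.2 (Pi.single i 1)

/-- Spatial gradient of a time-dependent scalar field. -/
def gradS (f : ℝ × V3 → ℝ) (p : ℝ × V3) : V3 := fun i => pdS i f p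

/-- Spatial divergence of a time-dependent vector field. -/
def divS (F : ℝ × V3 → V3) (p : ℝ × V3) : ℝ :=
  pdS 0 (fun q => F q 0) p + pdS 1 (fun q => F q 1) p + pdS 2 (fun q => F q 2) p

/-- Spatial curl of a time-dependent vector field. -/
def curlS (F : ℝ × V3 → V3) (p : ℝ × V3) : V3 :=
  ![pdS 1 (fun q => F q 2) p - pdS 2 (fun q => F q 1) p,
    pdS 2 (fun q => F q 0) p - pdS 0 (fun q => F q 2) p,
    pdS 0 (fun q => F q 1) p - pdS 1 (fun q => F q 0) p]

/-- Time partial derivative of a scalar field. -/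
def dtS (f : ℝ × V3 → ℝ) (p : ℝ × V3) : ℝ := deriv (fun t => f (t, p.2)) p.1

/-- Time partial derivative of a vector field. -/
def dtV (F : ℝ × V3 → V3) (p : ℝ × V3) : V3 := deriv (fun t => F (t, p.2)) p.1

/-- Fluid shear tensor `σ_ij = ½(∂u_i/∂x_j + ∂u_j/∂x_i) − (1/3) δ_ij ∇·u`. -/
def shearS (u : ℝ × V3 → V3) (p : ℝ × V3) : Fin 3 → Fin 3 → ℝ :=
  fun i j => (1 / 2) * (pdS j (fun q => u q i) p + pdS i (fun q => u q j) p)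
    - (1 / 3) * (if i = j then (1 : ℝ) else 0) * divS u p

/-- Matrix–vector product `(m·v)_i = Σ_j m_ij v_j`. -/
def matVec (m : Fin 3 → Fin 3 → ℝ) (v : V3) : V3 := fun i => ∑ j : Fin 3, m i j * v j

/-- Quadratic form `a·m·b = Σ_{i,j} a_i m_ij b_j`. -/
def quad3 (a : V3) (m : Fin 3 → Fin 3 → ℝ) (b : V3) : ℝ :=
  ∑ i : Fin 3, ∑ j : Fin 3, a i * m i j * b j

/-- Directional derivative `(v·∇)F` in the spatial variables. -/
def dirDS (v : V3) (F : ℝ × V3 → V3) (p : ℝ × V3) : V3 :=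
  fun i => v 0 * pdS 0 (fun q => F q i) p + v 1 * pdS 1 (fun q => F q i) p
    + v 2 * pdS 2 (fun q => F q i) p

theorem ContDiff.fderiv_apply_const {E F : Type*} [NormedAddCommGroup E] [NormedSpace ℝ E]
    [NormedAddCommGroup F] [NormedSpace ℝ F] {n : WithTop ℕ∞} {f : E → F}
    (hf : ContDiff ℝ (n + 1) f) (v : E) : ContDiff ℝ n (fun x => fderiv ℝ f x v) :=
  (hf.fderiv_right le_rfl).clm_apply contDiff_const

theorem fderiv_fderiv_apply_comm {E F : Type*} [NormedAddCommGroup E] [NormedSpace ℝ E]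
    [NormedAddCommGroup F] [NormedSpace ℝ F] {f : E → F} {x : E} (hf : ContDiffAt ℝ 2 f x)
    (v w : E) :
    fderiv ℝ (fun y => fderiv ℝ f y v) x w = fderiv ℝ (fun y => fderiv ℝ f y w) x v := by
  have hf' : DifferentiableAt ℝ (fderiv ℝ f) x :=
    (hf.fderiv_right (m := 1) le_rfl).differentiableAt one_ne_zero
  rw [fderiv_clm_apply hf' (differentiableAt_const v), fderiv_clm_apply hf' (differentiableAt_const w)]
  simpa using hf.isSymmSndFDerivAt (by simp) w v

section PartialDerivatives

variable {f g : ℝ × V3 → ℝ} {p : ℝ × V3}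

theorem pdS_eq_fderiv (hf : DifferentiableAt ℝ f p) (i : Fin 3) :
    pdS i f p = fderiv ℝ f p (0, Pi.single i 1) := by
  have hx : HasFDerivAt (fun x : V3 => (p.1, x)) (ContinuousLinearMap.inr ℝ ℝ V3) p.2 :=
    (hasFDerivAt_const p.1 p.2).prodMk (hasFDerivAt_id p.2)
  exact congrArg (· (Pi.single i 1)) (hf.hasFDerivAt.comp p.2 hx).fderiv

theorem dtS_eq_fderiv (hf : DifferentiableAt ℝ f p) : dtS f p = fderiv ℝ f p (1, 0) :=
  (hf.hasFDerivAt.comp_hasDerivAt p.1 ((hasDerivAt_id p.1).prodMk (hasDerivAt_const p.1 p.2))).deriv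

theorem pdS_eq_fderiv_fun (hf : Differentiable ℝ f) (i : Fin 3) :
    pdS i f = fun q => fderiv ℝ f q (0, Pi.single i 1) :=
  funext fun q => pdS_eq_fderiv (hf q) i

theorem dtS_eq_fderiv_fun (hf : Differentiable ℝ f) : dtS f = fun q => fderiv ℝ f q (1, 0) :=
  funext fun q => dtS_eq_fderiv (hf q)

theorem pdS_neg (i : Fin 3) : pdS i (fun q => -f q) p = -pdS i f p := by
  simp [pdS, fderiv_fun_neg]

theorem pdS_add (hf : DifferentiableAt ℝ f p) (hg : DifferentiableAt ℝ g p) (i : Fin 3) :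
    pdS i (fun q => f q + g q) p = pdS i f p + pdS i g p := by
  rw [pdS_eq_fderiv (hf.fun_add hg), pdS_eq_fderiv hf, pdS_eq_fderiv hg, fderiv_fun_add hf hg]
  rfl

theorem pdS_sub (hf : DifferentiableAt ℝ f p) (hg : DifferentiableAt ℝ g p) (i : Fin 3) :
    pdS i (fun q => f q - g q) p = pdS i f p - pdS i g p := by
  rw [pdS_eq_fderiv (hf.fun_sub hg), pdS_eq_fderiv hf, pdS_eq_fderiv hg, fderiv_fun_sub hf hg]
  rfl

theorem pdS_mul (hf : DifferentiableAt ℝ f p) (hg : DifferentiableAt ℝ g p) (i : Fin 3) :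
    pdS i (fun q => f q * g q) p = pdS i f p * g p + f p * pdS i g p := by
  rw [pdS_eq_fderiv (hf.fun_mul hg), pdS_eq_fderiv hf, pdS_eq_fderiv hg, fderiv_fun_mul hf hg]
  simp only [add_apply, smul_apply, smul_eq_mul]
  ring

theorem dtS_add (hf : DifferentiableAt ℝ f p) (hg : DifferentiableAt ℝ g p) :
    dtS (fun q => f q + g q) p = dtS f p + dtS g p := by
  rw [dtS_eq_fderiv (hf.fun_add hg), dtS_eq_fderiv hf, dtS_eq_fderiv hg, fderiv_fun_add hf hg]
  rfl

theorem dtS_sub (hf : DifferentiableAt ℝ f p) (hg : DifferentiableAt ℝ g p) :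
    dtS (fun q => f q - g q) p = dtS f p - dtS g p := by
  rw [dtS_eq_fderiv (hf.fun_sub hg), dtS_eq_fderiv hf, dtS_eq_fderiv hg, fderiv_fun_sub hf hg]
  rfl

theorem dtS_mul (hf : DifferentiableAt ℝ f p) (hg : DifferentiableAt ℝ g p) :
    dtS (fun q => f q * g q) p = dtS f p * g p + f p * dtS g p := by
  rw [dtS_eq_fderiv (hf.fun_mul hg), dtS_eq_fderiv hf, dtS_eq_fderiv hg, fderiv_fun_mul hf hg]
  simp only [add_apply, smul_apply, smul_eq_mul]
  ring

theorem contDiff_pdS {n : WithTop ℕ∞} (hf : ContDiff ℝ (n + 1) f) (i : Fin 3) :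
    ContDiff ℝ n (pdS i f) := by
  rw [pdS_eq_fderiv_fun (hf.differentiable (by simp))]
  exact hf.fderiv_apply_const _

theorem contDiff_dtS {n : WithTop ℕ∞} (hf : ContDiff ℝ (n + 1) f) : ContDiff ℝ n (dtS f) := by
  rw [dtS_eq_fderiv_fun (hf.differentiable (by simp))]
  exact hf.fderiv_apply_const _

theorem contDiff_gradS {n : WithTop ℕ∞} (hf : ContDiff ℝ (n + 1) f) : ContDiff ℝ n (gradS f) :=
  contDiff_pi.2 fun i => contDiff_pdS hf i

theorem differentiable_pdS (hf : ContDiff ℝ 2 f) (i : Fin 3) : Differentiable ℝ (pdS i f) :=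
  (contDiff_pdS (n := 1) hf i).differentiable one_ne_zero

theorem pdS_pdS_comm (hf : ContDiff ℝ 2 f) (i j : Fin 3) (p : ℝ × V3) :
    pdS i (pdS j f) p = pdS j (pdS i f) p := by
  have hd : Differentiable ℝ f := hf.differentiable (by norm_num)
  rw [pdS_eq_fderiv (differentiable_pdS hf j p), pdS_eq_fderiv (differentiable_pdS hf i p),
    pdS_eq_fderiv_fun hd j, pdS_eq_fderiv_fun hd i, fderiv_fderiv_apply_comm hf.contDiffAt]

theorem dtS_pdS_comm (hf : ContDiff ℝ 2 f) (i : Fin 3) (p : ℝ × V3) :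
    dtS (pdS i f) p = pdS i (dtS f) p := by
  have hd : Differentiable ℝ f := hf.differentiable (by norm_num)
  have hdt : Differentiable ℝ (dtS f) := (contDiff_dtS (n := 1) hf).differentiable one_ne_zero
  rw [dtS_eq_fderiv (differentiable_pdS hf i p), pdS_eq_fderiv (hdt p),
    pdS_eq_fderiv_fun hd i, dtS_eq_fderiv_fun hd, fderiv_fderiv_apply_comm hf.contDiffAt]

end PartialDerivatives

theorem DifferentiableAt.cross3 {X : Type*} [NormedAddCommGroup X] [NormedSpace ℝ X]
    {u v : X → V3} {x : X} (hu : DifferentiableAt ℝ u x) (hv : DifferentiableAt ℝ v x) :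
    DifferentiableAt ℝ (fun y => cross3 (u y) (v y)) x := by
  have hu' := differentiableAt_pi.1 hu
  have hv' := differentiableAt_pi.1 hv
  refine differentiableAt_pi.2 fun i => ?_
  fin_cases i <;> exact ((hu' _).fun_mul (hv' _)).fun_sub ((hu' _).fun_mul (hv' _))

section VectorCalculus

variable {F G : ℝ × V3 → V3} {f : ℝ × V3 → ℝ} {p : ℝ × V3}

theorem dtV_apply (hF : DifferentiableAt ℝ F p) (i : Fin 3) :
    dtV F p i = dtS (fun q => F q i) p := by
  have hline : DifferentiableAt ℝ (fun t => F (t, p.2)) p.1 :=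
    hF.comp p.1 (differentiableAt_id.prodMk (differentiableAt_const p.2))
  rw [dtV, deriv_pi fun j => differentiableAt_pi.1 hline j]
  rfl

theorem dtS_dot3 (hF : DifferentiableAt ℝ F p) (hG : DifferentiableAt ℝ G p) :
    dtS (fun q => dot3 (F q) (G q)) p = dot3 (dtV F p) (G p) + dot3 (F p) (dtV G p) := by
  have hF' := differentiableAt_pi.1 hF
  have hG' := differentiableAt_pi.1 hG
  simp only [dot3, dtV_apply hF, dtV_apply hG]
  rw [dtS_add (by fun_prop) (by fun_prop), dtS_add (by fun_prop) (by fun_prop),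
    dtS_mul (hF' 0) (hG' 0), dtS_mul (hF' 1) (hG' 1), dtS_mul (hF' 2) (hG' 2)]
  ring

theorem divS_add (hF : DifferentiableAt ℝ F p) (hG : DifferentiableAt ℝ G p) :
    divS (fun q => F q + G q) p = divS F p + divS G p := by
  have hF' := differentiableAt_pi.1 hF
  have hG' := differentiableAt_pi.1 hG
  simp only [divS, Pi.add_apply, pdS_add (hF' _) (hG' _)]
  ring

theorem divS_smul (hf : DifferentiableAt ℝ f p) (hF : DifferentiableAt ℝ F p) :
    divS (fun q => f q • F q) p = dot3 (gradS f p) (F p) + f p * divS F p := by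
  have hF' := differentiableAt_pi.1 hF
  simp only [divS, dot3, gradS, Pi.smul_apply, smul_eq_mul, pdS_mul hf (hF' _)]
  ring

theorem divS_cross3 (hF : DifferentiableAt ℝ F p) (hG : DifferentiableAt ℝ G p) :
    divS (fun q => cross3 (F q) (G q)) p = dot3 (G p) (curlS F p) - dot3 (F p) (curlS G p) := by
  have hF' := differentiableAt_pi.1 hF
  have hG' := differentiableAt_pi.1 hG
  simp only [divS, cross3, dot3, curlS, Matrix.cons_val_zero, Matrix.cons_val_one,
    Matrix.cons_val_two, Matrix.head_cons, Matrix.tail_cons]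
  simp only [pdS_sub ((hF' _).fun_mul (hG' _)) ((hF' _).fun_mul (hG' _)), pdS_mul (hF' _) (hG' _)]
  ring

theorem curlS_neg : curlS (fun q => -F q) p = -curlS F p := by
  simp only [curlS, Pi.neg_apply, pdS_neg, Matrix.neg_cons, Matrix.neg_empty, neg_sub,
    sub_neg_eq_add, neg_add_eq_sub]

theorem curlS_add (hF : DifferentiableAt ℝ F p) (hG : DifferentiableAt ℝ G p) :
    curlS (fun q => F q + G q) p = curlS F p + curlS G p := by
  have hF' := differentiableAt_pi.1 hF
  have hG' := differentiableAt_pi.1 hG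
  simp only [curlS, Pi.add_apply, pdS_add (hF' _) (hG' _), Matrix.cons_add_cons,
    Matrix.empty_add_empty, add_sub_add_comm]

theorem contDiff_curlS {n : WithTop ℕ∞} (hF : ContDiff ℝ (n + 1) F) : ContDiff ℝ n (curlS F) := by
  have hF' := contDiff_pi.1 hF
  refine contDiff_pi.2 fun i => ?_
  fin_cases i <;> exact (contDiff_pdS (hF' _) _).sub (contDiff_pdS (hF' _) _)

theorem divS_curlS (hF : ContDiff ℝ 2 F) (p : ℝ × V3) : divS (curlS F) p = 0 := by
  have hF' := contDiff_pi.1 hF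
  have hd : ∀ i j, DifferentiableAt ℝ (pdS i fun q => F q j) p :=
    fun i j => differentiable_pdS (hF' j) i p
  simp only [divS, curlS, Matrix.cons_val_zero, Matrix.cons_val_one, Matrix.cons_val_two,
    Matrix.head_cons, Matrix.tail_cons]
  rw [pdS_sub (hd _ _) (hd _ _), pdS_sub (hd _ _) (hd _ _), pdS_sub (hd _ _) (hd _ _),
    pdS_pdS_comm (hF' 2) 1 0, pdS_pdS_comm (hF' 1) 2 0, pdS_pdS_comm (hF' 0) 2 1]
  ring

theorem curlS_gradS (hf : ContDiff ℝ 2 f) (p : ℝ × V3) : curlS (gradS f) p = 0 := by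
  simp only [curlS, gradS, pdS_pdS_comm hf 2 1, pdS_pdS_comm hf 2 0, pdS_pdS_comm hf 1 0,
    sub_self, ← Matrix.zero_empty, Matrix.cons_zero_zero]

theorem dtV_curlS (hF : ContDiff ℝ 2 F) (p : ℝ × V3) : dtV (curlS F) p = curlS (dtV F) p := by
  have hF' := contDiff_pi.1 hF
  have hd : ∀ i j, DifferentiableAt ℝ (pdS i fun q => F q j) p :=
    fun i j => differentiable_pdS (hF' j) i p
  have hdtV : ∀ j, (fun q => dtV F q j) = dtS fun q => F q j :=
    fun j => funext fun q => dtV_apply (hF.differentiable (by norm_num) q) j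
  ext i
  rw [dtV_apply ((contDiff_curlS (n := 1) hF).differentiable one_ne_zero p)]
  fin_cases i <;>
    simp only [curlS, hdtV, Matrix.cons_val_zero, Matrix.cons_val_one, Matrix.cons_val_two,
      Matrix.head_cons, Matrix.tail_cons, Fin.zero_eta, Fin.mk_one, Fin.reduceFinMk] <;>
    rw [dtS_sub (hd _ _) (hd _ _), dtS_pdS_comm (hF' _), dtS_pdS_comm (hF' _)]

end VectorCalculus

/-- general magnetic helicity transport equation
`∂(A·B)/∂t + ∇·(E×A + ψ B) = −2 E·B`. -/
theorem magnetic_helicity_transport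
    (A E : ℝ × V3 → V3) (ψ : ℝ × V3 → ℝ)
    (hA : ContDiff ℝ 2 A) (hE : ContDiff ℝ 2 E) (hψ : ContDiff ℝ 2 ψ)
    (B : ℝ × V3 → V3) (hB : ∀ p, B p = curlS A p)
    (hFaraday : ∀ p, dtV A p + E p + gradS ψ p = 0) :
    ∀ p : ℝ × V3,
      dtS (fun q => dot3 (A q) (B q)) p
        + divS (fun q => cross3 (E q) (A q) + ψ q • B q) p
        = -2 * dot3 (E p) (B p) := by
  obtain rfl : B = curlS A := funext hB
  intro p
  have hA' : Differentiable ℝ A := hA.differentiable (by norm_num)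
  have hcurlA : Differentiable ℝ (curlS A) := (contDiff_curlS (n := 1) hA).differentiable one_ne_zero
  have hE' : Differentiable ℝ E := hE.differentiable (by norm_num)
  have hψ' : Differentiable ℝ ψ := hψ.differentiable (by norm_num)
  have hgradψ : Differentiable ℝ (gradS ψ) := (contDiff_gradS (n := 1) hψ).differentiable one_ne_zero
  have hdtA : dtV A = fun q => -(E q + gradS ψ q) :=
    funext fun q => eq_neg_of_add_eq_zero_left ((add_assoc _ _ _).symm.trans (hFaraday q))
  have hdtB : dtV (curlS A) p = -curlS E p := by
    rw [dtV_curlS hA, hdtA, curlS_neg, curlS_add (hE' p) (hgradψ p), curlS_gradS hψ, add_zero]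
  rw [dtS_dot3 (hA' p) (hcurlA p), divS_add ((hE' p).cross3 (hA' p)) ((hψ' p).fun_smul (hcurlA p)),
    divS_cross3 (hE' p) (hA' p), divS_smul (hψ' p) (hcurlA p), divS_curlS hA, hdtB, hdtA]
  simp only [dot3, Pi.neg_apply, Pi.add_apply]
  ring
end
end

section
/- Let ν, λ : ℝ³ → ℝ be C² scalar fields and η₁, η₂ : ℝ³ → ℝ C¹ scalar fields, and set η = η₁ ∇ν + η₂ ∇λ. Then the helicity density of η satisfies η·(∇×η) = (∇ν×∇λ)·( η₂ ∇η₁ − η₁ ∇η₂ ); equivalently, where η₂ ≠ 0, η·(∇×η) = (∇ν×∇λ) · η₂² ∇(η₁/η₂). -/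
/-! Since the curl of a gradient vanishes, `∇×(f∇φ) = ∇f×∇φ`, so `∇×η = ∇η₁×∇ν + ∇η₂×∇λ`.
Dotting with `η = η₁∇ν + η₂∇λ`, every triple product containing `∇ν` or `∇λ` twice vanishes, and
the two remaining ones rearrange to `(∇ν×∇λ)·(η₂∇η₁ − η₁∇η₂)`. The second form is the quotient
rule `η₂²∇(η₁/η₂) = η₂∇η₁ − η₁∇η₂`. -/

noncomputable section

/-- Partial derivative of a scalar field in the `i`-th Cartesian direction. -/
def pd (i : Fin 3) (f : V3 → ℝ) (x : V3) : ℝ := fderiv ℝ f x (Pi.single i 1)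

/-- Gradient of a scalar field. -/
def grad3 (f : V3 → ℝ) (x : V3) : V3 := fun i => pd i f x

/-- Divergence of a vector field. -/
def div3 (F : V3 → V3) (x : V3) : ℝ :=
  pd 0 (fun y => F y 0) x + pd 1 (fun y => F y 1) x + pd 2 (fun y => F y 2) x

/-- Curl of a vector field. -/
def curl3 (F : V3 → V3) (x : V3) : V3 :=
  ![pd 1 (fun y => F y 2) x - pd 2 (fun y => F y 1) x,
    pd 2 (fun y => F y 0) x - pd 0 (fun y => F y 2) x,
    pd 0 (fun y => F y 1) x - pd 1 (fun y => F y 0) x]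

/-- Directional derivative `(v·∇)F` of a vector field. -/
def dirD3 (v : V3) (F : V3 → V3) (x : V3) : V3 :=
  fun i => v 0 * pd 0 (fun y => F y i) x + v 1 * pd 1 (fun y => F y i) x
    + v 2 * pd 2 (fun y => F y i) x

section PartialDerivatives

variable {f g φ : V3 → ℝ} {x : V3}

lemma pd_add (hf : DifferentiableAt ℝ f x) (hg : DifferentiableAt ℝ g x) (i : Fin 3) :
    pd i (fun y => f y + g y) x = pd i f x + pd i g x := by
  simp [pd, fderiv_fun_add hf hg]

lemma pd_mul (hf : DifferentiableAt ℝ f x) (hg : DifferentiableAt ℝ g x) (i : Fin 3) :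
    pd i (fun y => f y * g y) x = pd i f x * g x + f x * pd i g x := by
  simp [pd, fderiv_fun_mul hf hg]
  ring

lemma pd_inv (hg : DifferentiableAt ℝ g x) (hgx : g x ≠ 0) (i : Fin 3) :
    pd i (fun y => (g y)⁻¹) x = -(pd i g x / g x ^ 2) := by
  have h := (hasFDerivAt_inv hgx).comp x hg.hasFDerivAt
  rw [Function.comp_def] at h
  simp [pd, h.fderiv, div_eq_mul_inv]

lemma sq_smul_grad3_div (hf : DifferentiableAt ℝ f x) (hg : DifferentiableAt ℝ g x)
    (hgx : g x ≠ 0) :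
    g x ^ 2 • grad3 (fun y => f y / g y) x = g x • grad3 f x - f x • grad3 g x := by
  ext i
  simp_rw [div_eq_mul_inv]
  simp only [grad3, Pi.smul_apply, Pi.sub_apply, smul_eq_mul]
  rw [pd_mul (g := fun y => (g y)⁻¹) hf (hg.inv hgx), pd_inv hg hgx]
  field_simp
  ring

lemma differentiableAt_pd (hφ : ContDiffAt ℝ 2 φ x) (i : Fin 3) :
    DifferentiableAt ℝ (pd i φ) x :=
  ((hφ.fderiv_right (m := 1) le_rfl).differentiableAt one_ne_zero).clm_apply
    (differentiableAt_const _)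

lemma differentiableAt_grad3 (hφ : ContDiffAt ℝ 2 φ x) : DifferentiableAt ℝ (grad3 φ) x :=
  differentiableAt_pi.2 (differentiableAt_pd hφ)

lemma pd_pd_comm (hφ : ContDiffAt ℝ 2 φ x) (i j : Fin 3) :
    pd i (pd j φ) x = pd j (pd i φ) x := by
  have hd : DifferentiableAt ℝ (fderiv ℝ φ) x :=
    (hφ.fderiv_right (m := 1) le_rfl).differentiableAt one_ne_zero
  have hpd (k l : Fin 3) :
      pd k (pd l φ) x = fderiv ℝ (fderiv ℝ φ) x (Pi.single k 1) (Pi.single l 1) := by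
    change fderiv ℝ (fun y => fderiv ℝ φ y (Pi.single l 1)) x (Pi.single k 1) = _
    simp [fderiv_clm_apply hd (differentiableAt_const _)]
  rw [hpd, hpd]
  exact hφ.isSymmSndFDerivAt (by simp [minSmoothness_of_isRCLikeNormedField]) _ _

end PartialDerivatives

section Curl

variable {F G : V3 → V3} {f φ : V3 → ℝ} {x : V3}

lemma curl3_add (hF : DifferentiableAt ℝ F x) (hG : DifferentiableAt ℝ G x) :
    curl3 (fun y => F y + G y) x = curl3 F x + curl3 G x := by
  have hFi := differentiableAt_pi.1 hF
  have hGi := differentiableAt_pi.1 hG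
  ext i
  fin_cases i <;>
    simp [curl3, pd_add (hFi _) (hGi _)] <;> ring

lemma curl3_smul_grad3 (hf : DifferentiableAt ℝ f x) (hφ : ContDiffAt ℝ 2 φ x) :
    curl3 (fun y => f y • grad3 φ y) x = cross3 (grad3 f x) (grad3 φ x) := by
  have hpd := differentiableAt_pd hφ
  ext i
  fin_cases i <;>
    simp [curl3, cross3, grad3, pd_mul hf (hpd _), pd_pd_comm hφ 1 2, pd_pd_comm hφ 0 2,
      pd_pd_comm hφ 0 1]

lemma curl3_clebsch {η1 η2 ν lam : V3 → ℝ} (hη1 : DifferentiableAt ℝ η1 x)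
    (hη2 : DifferentiableAt ℝ η2 x) (hν : ContDiffAt ℝ 2 ν x) (hlam : ContDiffAt ℝ 2 lam x) :
    curl3 (fun y => η1 y • grad3 ν y + η2 y • grad3 lam y) x
      = cross3 (grad3 η1 x) (grad3 ν x) + cross3 (grad3 η2 x) (grad3 lam x) := by
  rw [curl3_add (F := fun y => η1 y • grad3 ν y) (G := fun y => η2 y • grad3 lam y)
      (hη1.smul (differentiableAt_grad3 hν)) (hη2.smul (differentiableAt_grad3 hlam)),
    curl3_smul_grad3 hη1 hν, curl3_smul_grad3 hη2 hlam]

end Curl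

lemma dot3_smul_add_smul_cross3 (a b : ℝ) (u v p q : V3) :
    dot3 (a • u + b • v) (cross3 p u + cross3 q v) = dot3 (cross3 u v) (b • p - a • q) := by
  simp [dot3, cross3]
  ring

/-- helicity density of a field expanded in the Clebsch basis
`η = η₁∇ν + η₂∇λ`:
`η·(∇×η) = (∇ν×∇λ)·(η₂∇η₁ − η₁∇η₂) = (∇ν×∇λ)·η₂²∇(η₁/η₂)` (where `η₂ ≠ 0`). -/
theorem clebsch_helicity_density
    (ν lam η1 η2 : V3 → ℝ)
    (hν : ContDiff ℝ 2 ν) (hlam : ContDiff ℝ 2 lam)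
    (hη1 : ContDiff ℝ 1 η1) (hη2 : ContDiff ℝ 1 η2)
    (η : V3 → V3) (hη : ∀ x, η x = η1 x • grad3 ν x + η2 x • grad3 lam x) :
    ∀ x : V3,
      dot3 (η x) (curl3 η x)
        = dot3 (cross3 (grad3 ν x) (grad3 lam x))
            (η2 x • grad3 η1 x - η1 x • grad3 η2 x)
      ∧ (η2 x ≠ 0 →
          dot3 (η x) (curl3 η x)
            = dot3 (cross3 (grad3 ν x) (grad3 lam x))
                ((η2 x ^ 2) • grad3 (fun y => η1 y / η2 y) x)) := by
  intro x
  have hη1x := hη1.differentiable one_ne_zero x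
  have hη2x := hη2.differentiable one_ne_zero x
  have helicity : dot3 (η x) (curl3 η x)
      = dot3 (cross3 (grad3 ν x) (grad3 lam x)) (η2 x • grad3 η1 x - η1 x • grad3 η2 x) := by
    rw [hη x, funext hη, curl3_clebsch hη1x hη2x hν.contDiffAt hlam.contDiffAt,
      dot3_smul_add_smul_cross3]
  exact ⟨helicity, fun hη2ne => by rw [helicity, sq_smul_grad3_div hη1x hη2x hη2ne]⟩
end
end
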